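/- Set ρ_n = t_{n+1}/t_n. If there is an N ∈ ℕ such that ρ_n = 1/2 for all n ≥ N, then 𝓜 is a finite union of closed intervals. -/

import Mathlib

open MeasureTheory Filter Topology

/-- The limiting cumulative distribution function `F_ε(z)` of the approximation
coefficients, for a generalised α-Lüroth expansion determined by the sequence
`t` (1-indexed, `t 1 = 1`) and the sign sequence `ε` (0-indexed: `ε n` is the
paper's `ε_{n+1}`).  Here `a_n = t n - t (n+1)` and the `n`-th summand is
`a_n` if `a_n / t_{n+1-ε_n} < z` and `t_{n+1-ε_n}·z` otherwise. -/
noncomputable def F (t : ℕ → ℝ) (ε : ℕ → Fin 2) (z : ℝ) : ℝ :=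
  ∑' n : ℕ,
    if (t (n + 1) - t (n + 2)) / t (n + 2 - (ε n : ℕ)) < z
    then t (n + 1) - t (n + 2)
    else t (n + 2 - (ε n : ℕ)) * z

/-- The expected average value `M_ε = ∫_[0,1] (1 - F_ε) dλ`. -/
noncomputable def Mavg (t : ℕ → ℝ) (ε : ℕ → Fin 2) : ℝ :=
  ∫ z in Set.Icc (0 : ℝ) 1, (1 - F t ε z)

/-- `t` generates an α-Lüroth partition: `(t_n)_{n ≥ 1}` is a strictly decreasing
sequence in `(0,1]` with `t 1 = 1` tending to `0`. -/
structure IsLurothSeq (t : ℕ → ℝ) : Prop where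
  t_one : t 1 = 1
  pos : ∀ n, 1 ≤ n → 0 < t n
  anti : ∀ n, 1 ≤ n → t (n + 1) < t n
  tendsto_zero : Tendsto t atTop (nhds 0)

/-- Concatenation `ωε` of a finite word `ω ∈ {0,1}^n` with a sequence `ε ∈ {0,1}^ℕ`. -/
def cat {n : ℕ} (w : Fin n → Fin 2) (ε : ℕ → Fin 2) : ℕ → Fin 2 :=
  fun k => if h : k < n then w ⟨k, h⟩ else ε (k - n)

/-- The interval `I_ω = [M_{ω1̄}, M_{ω0̄}]`. -/
noncomputable def Iword (t : ℕ → ℝ) {n : ℕ} (w : Fin n → Fin 2) : Set ℝ :=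
  Set.Icc (Mavg t (cat w fun _ => 1)) (Mavg t (cat w fun _ => 0))

/-- The set `𝓜 = {M_ε : ε ∈ {0,1}^ℕ}`. -/
noncomputable def calM (t : ℕ → ℝ) : Set ℝ :=
  Set.range (Mavg t)

/-- The quantity `g(k) = ∫_[0,1] (f_k^1 - f_k^0) dλ`. -/
noncomputable def gseq (t : ℕ → ℝ) (k : ℕ) : ℝ :=
  if t (k + 1) / t k ≤ 1 / 2 then
    t k / 2 - t (k + 1) / 2 - (t (k + 1)) ^ 2 / (2 * t k)
  else
    (t k) ^ 2 / (2 * t (k + 1)) - (t (k + 1)) ^ 2 / (2 * t k)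
      + 3 * t (k + 1) / 2 - 3 * t k / 2

/-- The gap/overlap function `G(n) = g(n+1) - Σ_{k ≥ n+2} g(k)`. -/
noncomputable def Gseq (t : ℕ → ℝ) (n : ℕ) : ℝ :=
  gseq t (n + 1) - ∑' k : ℕ, gseq t (n + 2 + k)

/-- The common length `I(n)` of the intervals `I_ω` for `ω ∈ {0,1}^n`
(computed from the all-zeros word `ω = 0^n`). -/
noncomputable def Ilen (t : ℕ → ℝ) (n : ℕ) : ℝ :=
  Mavg t (fun _ => 0) - Mavg t (fun k => if k < n then 0 else 1)

/-- A Cantor set in `ℝ`: a nonempty compact set with empty interior and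
no isolated points. -/
def IsCantorSet (S : Set ℝ) : Prop :=
  S.Nonempty ∧ IsCompact S ∧ interior S = ∅ ∧ ∀ x ∈ S, AccPt x (Filter.principal S)

namespace CalMAux

/-- the `n`-th term of the series defining `F`. -/
noncomputable def fterm (t : ℕ → ℝ) (ε : ℕ → Fin 2) (n : ℕ) (z : ℝ) : ℝ :=
  if (t (n + 1) - t (n + 2)) / t (n + 2 - (ε n : ℕ)) < z
  then t (n + 1) - t (n + 2)
  else t (n + 2 - (ε n : ℕ)) * z

noncomputable def aseq (t : ℕ → ℝ) (n : ℕ) : ℝ := t (n + 1) - t (n + 2)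

noncomputable def mu (t : ℕ → ℝ) (n j : ℕ) : ℝ :=
  if 1 ≤ (t (n + 1) - t (n + 2)) / t (n + 2 - j) then t (n + 2 - j) / 2
  else (t (n + 1) - t (n + 2)) - (t (n + 1) - t (n + 2)) ^ 2 / (2 * t (n + 2 - j))

variable {t : ℕ → ℝ}

lemma aseq_pos (ht : IsLurothSeq t) (n : ℕ) : 0 < aseq t n :=
  sub_pos.2 (ht.anti (n + 1) (by omega))

lemma tau_pos (ht : IsLurothSeq t) (n : ℕ) {j : ℕ} (hj : j ≤ 1) : 0 < t (n + 2 - j) :=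
  ht.pos _ (by omega)

lemma hasSum_aseq (ht : IsLurothSeq t) : HasSum (aseq t) 1 := by
  rw [hasSum_iff_tendsto_nat_of_nonneg (fun n => (aseq_pos ht n).le)]
  have h : ∀ n, ∑ i ∈ Finset.range n, aseq t i = t 1 - t (n + 1) := by
    intro n
    simpa [aseq] using Finset.sum_range_sub' (fun i => t (i + 1)) n
  simp only [h]
  have : Tendsto (fun n : ℕ => t (n + 1)) atTop (nhds 0) :=
    ht.tendsto_zero.comp (tendsto_add_atTop_nat 1)
  simpa [ht.t_one] using tendsto_const_nhds.sub this

lemma summable_aseq (ht : IsLurothSeq t) : Summable (aseq t) := (hasSum_aseq ht).summable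

lemma tsum_aseq (ht : IsLurothSeq t) : ∑' n, aseq t n = 1 := (hasSum_aseq ht).tsum_eq

lemma fterm_measurable (ε : ℕ → Fin 2) (n : ℕ) : Measurable (fterm t ε n) :=
  Measurable.ite (measurableSet_lt measurable_const measurable_id) measurable_const
    (measurable_id.const_mul _)

lemma fterm_nonneg (ht : IsLurothSeq t) (ε : ℕ → Fin 2) (n : ℕ) {z : ℝ} (hz : 0 ≤ z) :
    0 ≤ fterm t ε n z := by
  unfold fterm
  split
  · exact (aseq_pos ht n).le
  · exact mul_nonneg (tau_pos ht n (by omega : (ε n : ℕ) ≤ 1)).le hz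

lemma fterm_le (ht : IsLurothSeq t) (ε : ℕ → Fin 2) (n : ℕ) (z : ℝ) :
    fterm t ε n z ≤ aseq t n := by
  unfold fterm
  split
  · exact le_rfl
  · next h =>
    push_neg at h
    have hτ := tau_pos ht n (by omega : (ε n : ℕ) ≤ 1)
    calc t (n + 2 - (ε n : ℕ)) * z
        ≤ t (n + 2 - (ε n : ℕ)) * ((t (n+1) - t (n+2)) / t (n + 2 - (ε n : ℕ))) :=
          mul_le_mul_of_nonneg_left h hτ.le
    _ = aseq t n := by field_simp [aseq]; rfl

lemma summable_fterm (ht : IsLurothSeq t) (ε : ℕ → Fin 2) {z : ℝ} (hz : 0 ≤ z) :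
    Summable (fun n => fterm t ε n z) :=
  Summable.of_nonneg_of_le (fun n => fterm_nonneg ht ε n hz) (fun n => fterm_le ht ε n z)
    (summable_aseq ht)

/-- The basic piecewise integral. -/
lemma integral_piece {A τ : ℝ} (hA : 0 < A) (hτ : 0 < τ) :
    ∫ z in Set.Icc (0:ℝ) 1, (if A / τ < z then A else τ * z) =
      if 1 ≤ A / τ then τ / 2 else A - A ^ 2 / (2 * τ) := by
  have hc : 0 < A / τ := div_pos hA hτ
  rw [MeasureTheory.integral_Icc_eq_integral_Ioc]
  by_cases h1 : 1 ≤ A / τ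
  · rw [if_pos h1]
    rw [setIntegral_congr_fun (g := fun z => τ * z) measurableSet_Ioc
      (fun z hz => if_neg (not_lt.2 (hz.2.trans h1)))]
    rw [← intervalIntegral.integral_of_le zero_le_one, intervalIntegral.integral_const_mul,
      integral_id]
    ring
  · rw [if_neg h1]
    push_neg at h1
    have hsplit : Set.Ioc (0:ℝ) 1 = Set.Ioc 0 (A/τ) ∪ Set.Ioc (A/τ) 1 :=
      (Set.Ioc_union_Ioc_eq_Ioc hc.le h1.le).symm
    have hint1 : IntegrableOn (fun z => if A / τ < z then A else τ * z)
        (Set.Ioc 0 (A/τ)) volume := by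
      apply (intervalIntegrable_iff_integrableOn_Ioc_of_le hc.le).1
      apply IntervalIntegrable.congr_ae (f := fun z => τ * z)
      · exact (continuous_const.mul continuous_id).intervalIntegrable _ _
      · rw [Set.uIoc_of_le hc.le]
        filter_upwards [ae_restrict_mem measurableSet_Ioc] with z hz
        exact (if_neg (not_lt.2 hz.2)).symm
    have hint2 : IntegrableOn (fun z => if A / τ < z then A else τ * z)
        (Set.Ioc (A/τ) 1) volume := by
      apply (intervalIntegrable_iff_integrableOn_Ioc_of_le h1.le).1
      apply IntervalIntegrable.congr_ae (f := fun _ => A)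
      · exact intervalIntegrable_const
      · rw [Set.uIoc_of_le h1.le]
        filter_upwards [ae_restrict_mem measurableSet_Ioc] with z hz
        exact (if_pos hz.1).symm
    rw [hsplit, setIntegral_union (Set.Ioc_disjoint_Ioc_of_le le_rfl) measurableSet_Ioc hint1 hint2]
    have e1 : ∫ z in Set.Ioc (0:ℝ) (A/τ), (if A / τ < z then A else τ * z)
        = τ * ((A/τ)^2)/2 := by
      rw [setIntegral_congr_fun (g := fun z => τ * z) measurableSet_Ioc
        (fun z hz => if_neg (not_lt.2 hz.2))]
      rw [← intervalIntegral.integral_of_le hc.le, intervalIntegral.integral_const_mul,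
        integral_id]
      ring
    have e2 : ∫ z in Set.Ioc (A/τ) (1:ℝ), (if A / τ < z then A else τ * z) = A * (1 - A/τ) := by
      rw [setIntegral_congr_fun (g := fun _ => A) measurableSet_Ioc
        (fun z hz => if_pos hz.1)]
      simp [Real.volume_Ioc, ENNReal.toReal_ofReal (sub_nonneg.2 h1.le), mul_comm, h1.le]
    rw [e1, e2]
    field_simp
    ring

lemma integral_fterm (ht : IsLurothSeq t) (ε : ℕ → Fin 2) (n : ℕ) :
    ∫ z in Set.Icc (0:ℝ) 1, fterm t ε n z = mu t n (ε n : ℕ) :=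
  integral_piece (aseq_pos ht n) (tau_pos ht n (by omega : (ε n : ℕ) ≤ 1))

lemma mu_nonneg (ht : IsLurothSeq t) (n : ℕ) {j : ℕ} (hj : j ≤ 1) : 0 ≤ mu t n j := by
  have hτ : 0 < t (n + 2 - j) := ht.pos _ (by omega)
  have hA : 0 < t (n + 1) - t (n + 2) := aseq_pos ht n
  unfold mu
  split
  · positivity
  · next h =>
    push_neg at h
    rw [div_lt_one hτ] at h
    have h2 : (t (n + 1) - t (n + 2)) ^ 2 / (2 * t (n + 2 - j)) ≤ (t (n + 1) - t (n + 2)) := by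
      rw [div_le_iff₀ (by positivity)]
      nlinarith
    linarith

lemma mu_le (ht : IsLurothSeq t) (n : ℕ) {j : ℕ} (hj : j ≤ 1) : mu t n j ≤ aseq t n := by
  have hτ : 0 < t (n + 2 - j) := ht.pos _ (by omega)
  have hA : 0 < t (n + 1) - t (n + 2) := aseq_pos ht n
  unfold mu aseq
  split
  · next h =>
    rw [le_div_iff₀ hτ] at h
    linarith
  · have : 0 ≤ (t (n + 1) - t (n + 2)) ^ 2 / (2 * t (n + 2 - j)) := by positivity
    linarith

lemma mu_sub_mu (ht : IsLurothSeq t) (n : ℕ) : mu t n 1 - mu t n 0 = gseq t (n + 1) := by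
  have h1 : 0 < t (n + 1) := ht.pos _ (by omega)
  have h2 : 0 < t (n + 2) := ht.pos _ (by omega)
  have hA : 0 < t (n + 1) - t (n + 2) := aseq_pos ht n
  have hs : n + 2 - 1 = n + 1 := by omega
  have e1 : mu t n 1 = (t (n + 1) - t (n + 2)) - (t (n + 1) - t (n + 2)) ^ 2 / (2 * t (n + 1)) := by
    unfold mu
    rw [hs, if_neg]
    rw [not_le, div_lt_one h1]
    linarith
  have hcond : (t (n + 1 + 1) / t (n + 1) ≤ 1 / 2) ↔
      (1 ≤ (t (n + 1) - t (n + 2)) / t (n + 2 - 0)) := by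
    simp only [Nat.sub_zero]
    rw [div_le_div_iff₀ h1 (by norm_num), le_div_iff₀ h2]
    constructor <;> intro h <;> nlinarith
  unfold gseq
  rw [e1]
  by_cases hc : t (n + 1 + 1) / t (n + 1) ≤ 1 / 2
  · rw [if_pos hc]
    have := hcond.1 hc
    unfold mu
    rw [if_pos this]
    simp only [Nat.sub_zero]
    have h3 : (n + 1 + 1) = n + 2 := by ring
    rw [h3]
    field_simp
    ring
  · rw [if_neg hc]
    have := hcond.not.1 hc
    unfold mu
    rw [if_neg this]
    simp only [Nat.sub_zero]
    have h3 : (n + 1 + 1) = n + 2 := by ring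
    rw [h3]
    field_simp
    ring

/-- Main representation: `M_ε` as a sum of coordinatewise contributions. -/
lemma Mavg_repr (ht : IsLurothSeq t) (ε : ℕ → Fin 2) :
    Mavg t ε = ∑' n, (aseq t n - mu t n (ε n : ℕ)) := by
  have hmeas : ∀ n : ℕ, AEStronglyMeasurable (fun z => aseq t n - fterm t ε n z)
      (volume.restrict (Set.Icc (0:ℝ) 1)) :=
    fun n => (measurable_const.sub (fterm_measurable ε n)).aestronglyMeasurable
  have hb : ∀ n : ℕ, ∀ z ∈ Set.Icc (0:ℝ) 1, ‖aseq t n - fterm t ε n z‖ ≤ aseq t n := by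
    intro n z hz
    have h1 := fterm_le ht ε n z
    have h2 := fterm_nonneg ht ε n hz.1
    have h3 := aseq_pos ht n
    rw [Real.norm_eq_abs, abs_le]
    constructor <;> linarith
  have step1 : Mavg t ε = ∫ z in Set.Icc (0:ℝ) 1, (∑' n, (aseq t n - fterm t ε n z)) := by
    unfold Mavg
    apply setIntegral_congr_fun measurableSet_Icc
    intro z hz
    have hsf := summable_fterm ht ε (z := z) hz.1
    show (1 : ℝ) - F t ε z = ∑' n, (aseq t n - fterm t ε n z)
    rw [Summable.tsum_sub (summable_aseq ht) hsf, tsum_aseq ht]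
    rfl
  rw [step1, integral_tsum hmeas]
  · apply tsum_congr
    intro n
    rw [integral_sub (integrableOn_const (μ := volume) (s := Set.Icc (0:ℝ) 1) (C := aseq t n)
        measure_Icc_lt_top.ne enorm_ne_top)
      (Measure.integrableOn_of_bounded (by simp) (fterm_measurable ε n).aestronglyMeasurable
        (M := aseq t n) ?_)]
    · rw [integral_fterm ht ε n]
      simp [Real.volume_Icc]
    · filter_upwards [ae_restrict_mem measurableSet_Icc] with z hz
      rw [Real.norm_eq_abs, abs_of_nonneg (fterm_nonneg ht ε n hz.1)]
      exact fterm_le ht ε n z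
  · apply ne_of_lt
    have hn : ∀ n : ℕ, ∫⁻ z in Set.Icc (0:ℝ) 1, ‖aseq t n - fterm t ε n z‖₊
        ≤ ENNReal.ofReal (aseq t n) := by
      intro n
      have : ∫⁻ z in Set.Icc (0:ℝ) 1, (‖aseq t n - fterm t ε n z‖₊ : ENNReal)
          ≤ ∫⁻ _ in Set.Icc (0:ℝ) 1, ENNReal.ofReal (aseq t n) := by
        apply lintegral_mono_ae
        filter_upwards [ae_restrict_mem measurableSet_Icc] with z hz
        rw [← enorm_eq_nnnorm, ← ofReal_norm]
        exact ENNReal.ofReal_le_ofReal (hb n z hz)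
      refine this.trans (le_of_eq ?_)
      simp [Real.volume_Icc]
    have h3 : (∑' n, ENNReal.ofReal (aseq t n)) = ENNReal.ofReal 1 := by
      rw [← ENNReal.ofReal_tsum_of_nonneg (fun n => (aseq_pos ht n).le) (summable_aseq ht),
        tsum_aseq ht]
    exact lt_of_le_of_lt ((ENNReal.tsum_le_tsum hn).trans_eq h3) ENNReal.ofReal_lt_top

lemma summable_asubmu (ht : IsLurothSeq t) (ε : ℕ → Fin 2) :
    Summable (fun n => aseq t n - mu t n (ε n : ℕ)) := by
  apply Summable.of_nonneg_of_le (fun n => ?_) (fun n => ?_) (summable_aseq ht)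
  · have := mu_le ht n (by omega : (ε n : ℕ) ≤ 1); linarith
  · have := mu_nonneg ht n (by omega : (ε n : ℕ) ≤ 1); linarith

lemma epsg_eq (ht : IsLurothSeq t) (ε : ℕ → Fin 2) (n : ℕ) :
    ((ε n : ℕ) : ℝ) * gseq t (n + 1) = mu t n (ε n : ℕ) - mu t n 0 := by
  have h2 : (ε n : ℕ) = 0 ∨ (ε n : ℕ) = 1 := by omega
  rcases h2 with h | h <;> rw [h]
  · simp
  · rw [← mu_sub_mu ht n]; simp

lemma summable_epsg (ht : IsLurothSeq t) (ε : ℕ → Fin 2) :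
    Summable (fun n => ((ε n : ℕ) : ℝ) * gseq t (n + 1)) := by
  have : (fun n => ((ε n : ℕ) : ℝ) * gseq t (n + 1))
      = fun n => (aseq t n - mu t n 0) - (aseq t n - mu t n (ε n : ℕ)) := by
    funext n
    rw [epsg_eq ht ε n]
    ring
  rw [this]
  have hs0 : Summable (fun n => aseq t n - mu t n 0) := by
    simpa using summable_asubmu ht (fun _ => 0)
  exact hs0.sub (summable_asubmu ht ε)

/-- The constant `C = M_{0̄}`. -/
noncomputable def Cc (t : ℕ → ℝ) : ℝ := ∑' n, (aseq t n - mu t n 0)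

lemma Mavg_eq_C_sub (ht : IsLurothSeq t) (ε : ℕ → Fin 2) :
    Mavg t ε = Cc t - ∑' n, ((ε n : ℕ) : ℝ) * gseq t (n + 1) := by
  rw [Mavg_repr ht ε]
  have : (fun n => aseq t n - mu t n (ε n : ℕ))
      = fun n => (aseq t n - mu t n 0) - ((ε n : ℕ) : ℝ) * gseq t (n + 1) := by
    funext n
    rw [epsg_eq ht ε n]
    ring
  have hs0 : Summable (fun n => aseq t n - mu t n 0) := by
    simpa using summable_asubmu ht (fun _ => 0)
  rw [this, Summable.tsum_sub hs0 (summable_epsg ht ε)]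
  rfl


section Binary

/-- Greedy binary remainder sequence. -/
noncomputable def brem (y : ℝ) : ℕ → ℝ
  | 0 => y
  | n + 1 => if (1/2 : ℝ) ^ n ≤ brem y n then brem y n - (1/2) ^ n else brem y n

/-- Greedy binary digits. -/
noncomputable def bdig (y : ℝ) (n : ℕ) : Fin 2 :=
  if (1/2 : ℝ) ^ n ≤ brem y n then 1 else 0

lemma brem_invariant {y : ℝ} (h0 : 0 ≤ y) (h2 : y ≤ 2) :
    ∀ n, 0 ≤ brem y n ∧ brem y n ≤ 2 * (1/2) ^ n := by
  intro n
  induction n with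
  | zero => exact ⟨h0, by simpa [brem] using h2⟩
  | succ n ih =>
    have hp : (0:ℝ) < (1/2 : ℝ) ^ n := by positivity
    simp only [brem]
    split
    · next h =>
      refine ⟨by linarith, ?_⟩
      have : (2:ℝ) * (1/2)^(n+1) = (1/2)^n := by ring
      rw [this]
      linarith [ih.2]
    · next h =>
      push_neg at h
      refine ⟨ih.1, ?_⟩
      have : (2:ℝ) * (1/2)^(n+1) = (1/2)^n := by ring
      rw [this]
      linarith

lemma brem_partial (y : ℝ) :
    ∀ n, ∑ k ∈ Finset.range n, ((bdig y k : ℕ) : ℝ) * (1/2) ^ k = y - brem y n := by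
  intro n
  induction n with
  | zero => simp [brem]
  | succ n ih =>
    rw [Finset.sum_range_succ, ih]
    by_cases h : (1/2 : ℝ) ^ n ≤ brem y n
    · simp only [bdig, brem, if_pos h]
      norm_num
      ring
    · simp only [bdig, brem, if_neg h]
      norm_num

lemma binary_hasSum {y : ℝ} (h0 : 0 ≤ y) (h2 : y ≤ 2) :
    HasSum (fun k => ((bdig y k : ℕ) : ℝ) * (1/2) ^ k) y := by
  rw [hasSum_iff_tendsto_nat_of_nonneg (fun k => by positivity)]
  simp only [brem_partial y]
  have hpow : Tendsto (fun n : ℕ => (2:ℝ) * (1/2) ^ n) atTop (nhds 0) := by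
    simpa using (tendsto_pow_atTop_nhds_zero_of_lt_one (by norm_num : (0:ℝ) ≤ 1/2)
      (by norm_num : (1/2:ℝ) < 1)).const_mul (2:ℝ)
  have hbr : Tendsto (brem y) atTop (nhds 0) :=
    squeeze_zero (fun n => (brem_invariant h0 h2 n).1) (fun n => (brem_invariant h0 h2 n).2) hpow
  simpa using tendsto_const_nhds.sub hbr

lemma summable_binary (δ : ℕ → Fin 2) :
    Summable (fun k => ((δ k : ℕ) : ℝ) * (1/2) ^ k) := by
  apply Summable.of_nonneg_of_le (fun k => by positivity) (fun k => ?_)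
    (summable_geometric_of_lt_one (by norm_num) (by norm_num) : Summable fun k : ℕ => (1/2:ℝ)^k)
  have : ((δ k : ℕ) : ℝ) ≤ 1 := by
    have := (δ k).isLt
    exact_mod_cast Nat.lt_succ_iff.1 this
  nlinarith [pow_pos (by norm_num : (0:ℝ) < 1/2) k]

lemma binary_tsum_mem (δ : ℕ → Fin 2) :
    (∑' k, ((δ k : ℕ) : ℝ) * (1/2) ^ k) ∈ Set.Icc (0:ℝ) 2 := by
  constructor
  · exact tsum_nonneg (fun k => by positivity)
  · have h := Summable.tsum_le_tsum (f := fun k => ((δ k : ℕ) : ℝ) * (1/2) ^ k)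
      (g := fun k : ℕ => (1/2:ℝ)^k) (fun k => ?_) (summable_binary δ)
      (summable_geometric_of_lt_one (by norm_num) (by norm_num))
    · rwa [tsum_geometric_of_lt_one (by norm_num) (by norm_num), show ((1:ℝ) - 1/2)⁻¹ = 2 by norm_num] at h
    · have : ((δ k : ℕ) : ℝ) ≤ 1 := by
        have := (δ k).isLt
        exact_mod_cast Nat.lt_succ_iff.1 this
      nlinarith [pow_pos (by norm_num : (0:ℝ) < 1/2) k]

end Binary

section Tail

variable {t : ℕ → ℝ} {N : ℕ}

lemma t_half (ht : IsLurothSeq t) (hρ : ∀ n, N ≤ n → t (n + 1) / t n = 1 / 2) :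
    ∀ n, N ≤ n → 1 ≤ n → t (n + 1) = t n / 2 := by
  intro n hn hn1
  have hpos : (0:ℝ) < t n := ht.pos n hn1
  have := hρ n hn
  field_simp at this
  linarith

lemma t_geom (ht : IsLurothSeq t) (hρ : ∀ n, N ≤ n → t (n + 1) / t n = 1 / 2) :
    ∀ k, t (N + 1 + k) = t (N + 1) * (1/2) ^ k := by
  intro k
  induction k with
  | zero => simp
  | succ k ih =>
    have : N + 1 + (k + 1) = (N + 1 + k) + 1 := by ring
    rw [this, t_half ht hρ (N + 1 + k) (by omega) (by omega), ih]
    ring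

lemma g_half (ht : IsLurothSeq t) (hρ : ∀ n, N ≤ n → t (n + 1) / t n = 1 / 2) :
    ∀ n, N ≤ n → gseq t (n + 1) = t (n + 1) / 8 := by
  intro n hn
  have hpos : (0:ℝ) < t (n + 1) := ht.pos _ (by omega)
  have h12 : t (n + 1 + 1) = t (n + 1) / 2 := t_half ht hρ (n + 1) (by omega) (by omega)
  unfold gseq
  rw [if_pos (by rw [hρ (n + 1) (by omega)]), h12]
  field_simp
  ring

end Tail


lemma key {N : ℕ} (ht : IsLurothSeq t) (hρ : ∀ n, N ≤ n → t (n + 1) / t n = 1 / 2)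
    (ε : ℕ → Fin 2) :
    Mavg t ε = Cc t - (∑ i ∈ Finset.range N, ((ε i : ℕ) : ℝ) * gseq t (i + 1))
      - (t (N + 1) / 8) * (∑' k, ((ε (k + N) : ℕ) : ℝ) * (1/2) ^ k) := by
  rw [Mavg_eq_C_sub ht ε, ← Summable.sum_add_tsum_nat_add N (summable_epsg ht ε)]
  have htail : (∑' k, ((ε (k + N) : ℕ) : ℝ) * gseq t (k + N + 1))
      = (t (N + 1) / 8) * ∑' k, ((ε (k + N) : ℕ) : ℝ) * (1/2) ^ k := by
    rw [← tsum_mul_left]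
    apply tsum_congr
    intro k
    have h1 : gseq t (k + N + 1) = t (k + N + 1) / 8 := g_half ht hρ (k + N) (by omega)
    have h2 : t (k + N + 1) = t (N + 1) * (1/2) ^ k := by
      have h : k + N + 1 = N + 1 + k := by ring
      rw [h]
      exact t_geom ht hρ k
    rw [h1, h2]
    ring
  rw [htail]
  ring

end CalMAux

/-- With `ρ_n = t_{n+1}/t_n`, if `ρ_n = 1/2` for all `n ≥ N`, then
`𝓜` is a finite union of closed intervals. -/
theorem calM_finite_union_of_half (t : ℕ → ℝ) (ht : IsLurothSeq t)
    (N : ℕ) (hρ : ∀ n, N ≤ n → t (n + 1) / t n = 1 / 2) :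
    ∃ (K : ℕ) (J : Fin K → Set ℝ),
      (∀ k, ∃ a b : ℝ, a ≤ b ∧ J k = Set.Icc a b) ∧ calM t = ⋃ k, J k := by
  classical
  have htN : 0 < t (N + 1) := ht.pos _ (by omega)
  set C := CalMAux.Cc t with hC
  set Sw : (Fin N → Fin 2) → ℝ :=
    (fun w => ∑ i ∈ Finset.range N, ((cat w (fun _ => 0) i : ℕ) : ℝ) * gseq t (i + 1)) with hSw
  refine ⟨2 ^ N, fun k =>
    Set.Icc (C - Sw (finFunctionFinEquiv.symm k) - t (N + 1) / 4)
      (C - Sw (finFunctionFinEquiv.symm k)), fun k => ⟨_, _, by linarith, rfl⟩, ?_⟩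
  ext x
  simp only [calM, Set.mem_range, Set.mem_iUnion]
  constructor
  · rintro ⟨ε, rfl⟩
    refine ⟨finFunctionFinEquiv (fun i : Fin N => ε i), ?_⟩
    rw [Equiv.symm_apply_apply]
    rw [CalMAux.key ht hρ ε]
    have hsum : (∑ i ∈ Finset.range N, ((ε i : ℕ) : ℝ) * gseq t (i + 1))
        = Sw (fun i : Fin N => ε i) := by
      rw [hSw]
      refine Finset.sum_congr rfl (fun i hi => ?_)
      have hi' : i < N := Finset.mem_range.1 hi
      rw [cat, dif_pos hi']
    have hmem := CalMAux.binary_tsum_mem (fun k => ε (k + N))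
    rw [hsum]
    constructor
    · have : (t (N + 1) / 8) * (∑' k, ((ε (k + N) : ℕ) : ℝ) * (1/2) ^ k) ≤ t (N + 1) / 4 := by
        nlinarith [hmem.1, hmem.2]
      linarith
    · have : 0 ≤ (t (N + 1) / 8) * (∑' k, ((ε (k + N) : ℕ) : ℝ) * (1/2) ^ k) := by
        nlinarith [hmem.1]
      linarith
  · rintro ⟨k, hk⟩
    set w := finFunctionFinEquiv.symm k with hw
    set v := C - Sw w - x with hv
    have hv0 : 0 ≤ v := by
      have := hk.2
      rw [hv]
      linarith
    have hvT : v ≤ t (N + 1) / 4 := by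
      have := hk.1
      rw [hv]
      linarith
    set y := v / (t (N + 1) / 8) with hy
    have ht8 : (0:ℝ) < t (N + 1) / 8 := by linarith
    have hy0 : 0 ≤ y := div_nonneg hv0 ht8.le
    have hy2 : y ≤ 2 := by
      rw [hy, div_le_iff₀ ht8]
      linarith
    refine ⟨cat w (CalMAux.bdig y), ?_⟩
    rw [CalMAux.key ht hρ (cat w (CalMAux.bdig y))]
    have h1 : (∑ i ∈ Finset.range N, ((cat w (CalMAux.bdig y) i : ℕ) : ℝ) * gseq t (i + 1))
        = Sw w := by
      rw [hSw]
      refine Finset.sum_congr rfl (fun i hi => ?_)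
      have hi' : i < N := Finset.mem_range.1 hi
      rw [cat, cat, dif_pos hi', dif_pos hi']
    have h3 : (∑' k, ((cat w (CalMAux.bdig y) (k + N) : ℕ) : ℝ) * (1/2) ^ k) = y := by
      have h2 : ∀ m : ℕ, cat w (CalMAux.bdig y) (m + N) = CalMAux.bdig y m := by
        intro m
        rw [cat, dif_neg (by omega)]
        congr 1
        omega
      calc (∑' k, ((cat w (CalMAux.bdig y) (k + N) : ℕ) : ℝ) * (1/2) ^ k)
          = ∑' k, ((CalMAux.bdig y k : ℕ) : ℝ) * (1/2) ^ k :=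
            tsum_congr (fun m => by rw [h2 m])
      _ = y := (CalMAux.binary_hasSum hy0 hy2).tsum_eq
    rw [h1, h3]
    have h4 : (t (N + 1) / 8) * y = v := by
      rw [hy, mul_comm, div_mul_cancel₀ v ht8.ne']
    rw [h4, hv]
    ring
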